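/- Let m ≥ 1 be an integer, ν > 0 and u > 0. Then ∫₀^∞ s^{m−1} e^{−us} E_{1/2}(−ν s^{1/2}) ds = u^{−m} ∫₀^∞ ∫₀^∞ s^{m−1} e^{−s − ν (s/u)^{1/2} t^{−1/2}} f_{1/2}(t) dt ds, where E_{1/2}(x) = ∑_{k=0}^∞ x^k / Γ(1+k/2) and f_{1/2}(t) = (2√π)^{−1} t^{−3/2} e^{−1/(4t)} for t > 0, both sides being finite. -/

import Mathlib

open MeasureTheory Real Set

/-- The Mittag-Leffler function `E_α(x) = ∑_{k=0}^∞ x^k / Γ(1+kα)`. -/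
noncomputable def mittagLeffler (α x : ℝ) : ℝ := ∑' k : ℕ, x ^ k / Real.Gamma (1 + k * α)

/-- The density `f_{1/2}(t) = (2√π)^{−1} t^{−3/2} e^{−1/(4t)}` of the positive stable
law of index 1/2. -/
noncomputable def stableHalf (t : ℝ) : ℝ :=
  (2 * Real.sqrt π)⁻¹ * t ^ (-(3 / 2) : ℝ) * Real.exp (-1 / (4 * t))

/-!
Expanding `exp (x r)` in its power series and integrating term by term against `exp (-r² / 4)`
on `(0, ∞)`, the Gaussian moments `∫ r^k e^{-r²/4} dr = 2^k Γ((k + 1)/2)` and Legendre's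
duplication formula give `E_{1/2}(x) = π^{-1/2} ∫₀^∞ e^{x r - r²/4} dr` for every real `x`.
The substitution `t = r⁻²` turns this into the subordination formula
`E_{1/2}(x) = ∫₀^∞ e^{x t^{-1/2}} f_{1/2}(t) dt`, which evaluates the inner integral. The same
representation shows that `E_{1/2}` is monotone, hence measurable, and takes values in `[0, 1]`
on `(-∞, 0]`, so both integrands are dominated by `s^{m-1} e^{-c s}`; the identity then follows by
rescaling `s ↦ u s`.
-/

open scoped Nat

theorem integral_pow_mul_exp_neg_quarter_mul_sq (k : ℕ) :
    ∫ r in Ioi (0:ℝ), r ^ k * exp (-(1 / 4) * r ^ 2) = 2 ^ k * Gamma ((k + 1) / 2) := by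
  have h := integral_rpow_mul_exp_neg_mul_rpow (p := 2) (q := k) (b := 1 / 4) two_pos
    (by linarith [k.cast_nonneg (α := ℝ)]) (by norm_num)
  simp only [rpow_natCast, rpow_two] at h
  have hquarter : (1 / 4 : ℝ) ^ (-((k:ℝ) + 1) / 2) = 2 ^ (k + 1) := by
    rw [show (1 / 4 : ℝ) = 2 ^ (-2 : ℝ) by norm_num, ← rpow_mul zero_le_two,
      show (-2 : ℝ) * (-((k:ℝ) + 1) / 2) = (k + 1 : ℕ) by push_cast; ring, rpow_natCast]
  rw [h, hquarter, pow_succ]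
  ring

theorem two_pow_mul_Gamma_div_factorial (k : ℕ) :
    2 ^ k * Gamma ((k + 1) / 2) / k ! = √π / Gamma (1 + k / 2) := by
  have hdup := Gamma_mul_Gamma_add_half (((k:ℝ) + 1) / 2)
  rw [show ((k:ℝ) + 1) / 2 + 1 / 2 = 1 + k / 2 by ring, show 2 * (((k:ℝ) + 1) / 2) = k + 1 by ring,
    Gamma_nat_eq_factorial, show (1:ℝ) - (k + 1) = -(k:ℕ) by ring, rpow_neg zero_le_two,
    rpow_natCast] at hdup
  have hΓ : Gamma (1 + k / 2) ≠ 0 := (Gamma_pos_of_pos (by positivity)).ne'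
  rw [div_eq_div_iff (by positivity) hΓ, mul_assoc, hdup]
  field_simp

theorem integrable_exp_mul_mul_exp_neg_mul_sq {b : ℝ} (hb : 0 < b) (c : ℝ) :
    Integrable fun r : ℝ => exp (c * r) * exp (-b * r ^ 2) := by
  -- complete the square
  refine (((integrable_exp_neg_mul_sq hb).comp_sub_right (c / (2 * b))).const_mul
    (exp (c ^ 2 / (4 * b)))).congr (ae_of_all _ fun r => ?_)
  simp only [← exp_add]
  congr 1
  field_simp
  ring

theorem hasSum_mittagLeffler_half (x : ℝ) :
    HasSum (fun k : ℕ => x ^ k / Gamma (1 + k * (1 / 2)))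
      ((√π)⁻¹ * ∫ r in Ioi (0:ℝ), exp (x * r) * exp (-(1 / 4) * r ^ 2)) := by
  set g : ℝ → ℝ := fun r => exp (-(1 / 4) * r ^ 2)
  have hexp (y r : ℝ) : HasSum (fun k : ℕ => (y * r) ^ k / k ! * g r) (exp (y * r) * g r) := by
    rw [exp_eq_exp_ℝ]
    exact (NormedSpace.expSeries_div_hasSum_exp (y * r)).mul_right _
  have hterm (k : ℕ) :
      ∫ r in Ioi (0:ℝ), (x * r) ^ k / k ! * g r = x ^ k * (√π / Gamma (1 + k / 2)) := by
    rw [← two_pow_mul_Gamma_div_factorial, ← integral_pow_mul_exp_neg_quarter_mul_sq,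
      ← integral_div, ← integral_const_mul]
    congr 1 with r
    rw [mul_pow]
    ring
  have hint := hasSum_integral_of_dominated_convergence (μ := volume.restrict (Ioi 0))
    (fun k r => (|x| * r) ^ k / k ! * g r)
    (fun k => (by fun_prop : Continuous fun r => (x * r) ^ k / k ! * g r).aestronglyMeasurable)
    (fun k => (ae_restrict_iff' measurableSet_Ioi).2 (ae_of_all _ fun r (hr : 0 < r) => by
      rw [norm_mul, norm_div, norm_pow, norm_mul, Real.norm_of_nonneg hr.le,
        Real.norm_of_nonneg (exp_pos _).le, RCLike.norm_natCast, Real.norm_eq_abs]))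
    (ae_of_all _ fun r => (hexp |x| r).summable)
    (by simpa only [(hexp |x| _).tsum_eq] using
      (integrable_exp_mul_mul_exp_neg_mul_sq (by norm_num) |x|).restrict)
    (ae_of_all _ fun r => hexp x r)
  refine (hint.mul_left (√π)⁻¹).congr_fun fun k => ?_
  rw [hterm, mul_one_div]
  field_simp

theorem mittagLeffler_half_eq_integral (x : ℝ) :
    mittagLeffler (1 / 2) x = (√π)⁻¹ * ∫ r in Ioi (0:ℝ), exp (x * r) * exp (-(1 / 4) * r ^ 2) :=
  (hasSum_mittagLeffler_half x).tsum_eq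

theorem mittagLeffler_half_monotone : Monotone (mittagLeffler (1 / 2)) := by
  intro x y hxy
  simp only [mittagLeffler_half_eq_integral]
  gcongr ?_ * ?_
  refine setIntegral_mono_on (integrable_exp_mul_mul_exp_neg_mul_sq (by norm_num) x).integrableOn
    (integrable_exp_mul_mul_exp_neg_mul_sq (by norm_num) y).integrableOn measurableSet_Ioi
    fun r (hr : 0 < r) => ?_
  gcongr

theorem mittagLeffler_half_nonneg (x : ℝ) : 0 ≤ mittagLeffler (1 / 2) x := by
  rw [mittagLeffler_half_eq_integral]
  exact mul_nonneg (by positivity) (integral_nonneg fun r => by positivity)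

theorem mittagLeffler_zero (α : ℝ) : mittagLeffler α 0 = 1 := by
  rw [mittagLeffler, tsum_eq_single 0 fun k hk => by rw [zero_pow hk, zero_div]]
  simp

theorem mittagLeffler_half_le_one {x : ℝ} (hx : x ≤ 0) : mittagLeffler (1 / 2) x ≤ 1 :=
  (mittagLeffler_half_monotone hx).trans_eq (mittagLeffler_zero _)

theorem integral_exp_mul_rpow_neg_half_mul_stableHalf (x : ℝ) :
    ∫ t in Ioi (0:ℝ), exp (x * t ^ (-(1 / 2) : ℝ)) * stableHalf t = mittagLeffler (1 / 2) x := by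
  -- substitute `t = r⁻²`
  rw [← integral_comp_rpow_Ioi _ (p := -2) (by norm_num), mittagLeffler_half_eq_integral,
    ← integral_const_mul]
  refine setIntegral_congr_fun measurableSet_Ioi fun r (hr : 0 < r) => ?_
  have hpow (a b : ℝ) : (r ^ a) ^ b = r ^ (a * b) := (rpow_mul hr.le a b).symm
  have hneg (n : ℕ) : r ^ (-(n:ℝ)) = (r ^ n)⁻¹ := by rw [rpow_neg hr.le, rpow_natCast]
  simp only [smul_eq_mul, stableHalf, hpow]
  rw [show (-2:ℝ) - 1 = -(3:ℕ) by norm_num, show (-2:ℝ) * -(1 / 2) = 1 by norm_num,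
    show (-2:ℝ) * -(3 / 2) = (3:ℕ) by norm_num, show (-2:ℝ) = -(2:ℕ) by norm_num, hneg, hneg,
    rpow_one, rpow_natCast, abs_neg, Nat.abs_cast, show -1 / (4 * (r ^ 2)⁻¹) = -(1 / 4) * r ^ 2 by
      field_simp]
  field_simp
  push_cast
  ring

theorem integral_pow_mul_exp_neg_mul_comp_div (g : ℝ → ℝ) (n : ℕ) {u : ℝ} (hu : 0 < u) :
    ∫ s in Ioi (0:ℝ), s ^ n * exp (-s) * g (s / u)
      = u ^ (n + 1) * ∫ s in Ioi (0:ℝ), s ^ n * exp (-u * s) * g s := by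
  have h := integral_comp_mul_left_Ioi (fun s => s ^ n * exp (-s) * g (s / u)) 0 hu
  have hscale : ∫ s in Ioi (0:ℝ), (u * s) ^ n * exp (-(u * s)) * g (u * s / u)
      = u ^ n * ∫ s in Ioi (0:ℝ), s ^ n * exp (-u * s) * g s := by
    rw [← integral_const_mul]
    congr 1 with s
    rw [mul_div_cancel_left₀ _ hu.ne', mul_pow, neg_mul]
    ring
  rw [mul_zero, smul_eq_mul, hscale] at h
  rw [pow_succ', mul_assoc, h, mul_inv_cancel_left₀ hu.ne']

theorem integrableOn_pow_mul_exp_neg_mul_mul {g : ℝ → ℝ} (n : ℕ) {c C : ℝ} (hc : 0 < c)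
    (hg : Measurable g) (hC : ∀ s, 0 < s → ‖g s‖ ≤ C) :
    IntegrableOn (fun s => s ^ n * exp (-c * s) * g s) (Ioi 0) := by
  have h := integrableOn_rpow_mul_exp_neg_mul_rpow (p := 1) (s := n)
    (by linarith [n.cast_nonneg (α := ℝ)]) one_pos hc
  simp only [rpow_natCast, rpow_one] at h
  exact h.mul_bdd hg.aestronglyMeasurable
    ((ae_restrict_iff' measurableSet_Ioi).2 (ae_of_all _ hC))

/-- Let m ≥ 1 be an integer, ν > 0 and u > 0.  Then
∫₀^∞ s^{m−1} e^{−us} E_{1/2}(−ν s^{1/2}) ds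
  = u^{−m} ∫₀^∞ ∫₀^∞ s^{m−1} e^{−s − ν (s/u)^{1/2} t^{−1/2}} f_{1/2}(t) dt ds,
both sides being finite. -/
theorem stmt13 (m : ℕ) (hm : 1 ≤ m) (ν u : ℝ) (hν : 0 < ν) (hu : 0 < u) :
    IntegrableOn (fun s : ℝ =>
        s ^ (m - 1) * Real.exp (-u * s) * mittagLeffler (1 / 2) (-ν * s ^ ((1:ℝ) / 2)))
      (Ioi 0) ∧
    IntegrableOn (fun s : ℝ => ∫ t in Ioi (0:ℝ),
        s ^ (m - 1) *
          Real.exp (-s - ν * (s / u) ^ ((1:ℝ) / 2) * t ^ (-(1 / 2) : ℝ)) * stableHalf t)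
      (Ioi 0) ∧
    ∫ s in Ioi (0:ℝ),
        s ^ (m - 1) * Real.exp (-u * s) * mittagLeffler (1 / 2) (-ν * s ^ ((1:ℝ) / 2))
      = u ^ (-(m : ℝ)) * ∫ s in Ioi (0:ℝ), ∫ t in Ioi (0:ℝ),
          s ^ (m - 1) *
            Real.exp (-s - ν * (s / u) ^ ((1:ℝ) / 2) * t ^ (-(1 / 2) : ℝ)) *
              stableHalf t := by
  obtain ⟨n, rfl⟩ : ∃ n, m = n + 1 := ⟨m - 1, by omega⟩
  simp only [Nat.add_sub_cancel]
  set ψ : ℝ → ℝ := fun s => mittagLeffler (1 / 2) (-ν * s ^ ((1:ℝ) / 2))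
  have hψ_meas : Measurable ψ := mittagLeffler_half_monotone.measurable.comp (by fun_prop)
  have hψ_bound (s : ℝ) (hs : 0 < s) : ‖ψ s‖ ≤ 1 := by
    rw [Real.norm_of_nonneg (mittagLeffler_half_nonneg _)]
    exact mittagLeffler_half_le_one (by nlinarith [rpow_nonneg hs.le ((1:ℝ) / 2)])
  have hinner (s : ℝ) : ∫ t in Ioi (0:ℝ),
      s ^ n * exp (-s - ν * (s / u) ^ ((1:ℝ) / 2) * t ^ (-(1 / 2) : ℝ)) * stableHalf t
        = s ^ n * exp (-s) * ψ (s / u) := by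
    simp only [ψ]
    rw [← integral_exp_mul_rpow_neg_half_mul_stableHalf, ← integral_const_mul]
    congr 1 with t
    rw [sub_eq_add_neg, exp_add]
    ring_nf
  simp only [hinner]
  refine ⟨integrableOn_pow_mul_exp_neg_mul_mul n hu hψ_meas hψ_bound, ?_, ?_⟩
  · simpa only [neg_mul, one_mul] using integrableOn_pow_mul_exp_neg_mul_mul n one_pos
      (by fun_prop : Measurable fun s => ψ (s / u)) fun s hs => hψ_bound _ (div_pos hs hu)
  · rw [integral_pow_mul_exp_neg_mul_comp_div ψ n hu, rpow_neg hu.le, rpow_natCast,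
      inv_mul_cancel_left₀ (pow_ne_zero _ hu.ne')]
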